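/- arXiv:2106.01224 — 8 statements merged into one kernel-verified Lean document; each statement's English description precedes it below -/
import Mathlib

section
/- Every BST⊗-formula Φ with n distinct variables is satisfiable (by a set assignment) if and only if it is satisfied by some partition with 2^n − 1 blocks. -/
namespace BSTO

/-- The unordered Cartesian product `s ⊗ t = {{u,v} | u ∈ s, v ∈ t}`, as a class of ZFC sets. -/
def uprod (s t : ZFSet) : Set ZFSet := {w | ∃ u ∈ s, ∃ v ∈ t, w = ({u, v} : ZFSet)}

/-- A partition: a collection of pairwise disjoint nonempty sets. -/
def IsPartition (S : ZFSet) : Prop :=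
  (∀ b, b ∈ S → b ≠ (∅ : ZFSet)) ∧
    ∀ b, b ∈ S → ∀ c, c ∈ S → b ≠ c → ∀ t, t ∈ b → t ∉ c

/-- `Pow*₁,₂ B`: members of the intersecting power set of `B` of cardinality 1 or 2. -/
def powAst12 (B : ZFSet) : Set ZFSet :=
  {t | t ⊆ ZFSet.sUnion B ∧ (∀ s, s ∈ B → ∃ u, u ∈ t ∧ u ∈ s) ∧ ∃ u v : ZFSet, t = {u, v}}

/-- BST⊗-formulae. -/
inductive Fmla (V : Type) : Type
  | eqUnion (x y z : V)
  | eqInter (x y z : V)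
  | eqDiff  (x y z : V)
  | eqUprod (x y z : V)
  | subset  (x y : V)
  | not (φ : Fmla V)
  | and (φ ψ : Fmla V)
  | or (φ ψ : Fmla V)

def Fmla.Sat {V : Type} (M : V → ZFSet) : Fmla V → Prop
  | .eqUnion x y z => M x = M y ∪ M z
  | .eqInter x y z => M x = M y ∩ M z
  | .eqDiff x y z  => M x = M y \ M z
  | .eqUprod x y z => (M x).toSet = uprod (M y) (M z)
  | .subset x y    => M x ⊆ M y
  | .not φ         => ¬ Fmla.Sat M φ
  | .and φ ψ       => Fmla.Sat M φ ∧ Fmla.Sat M ψ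
  | .or φ ψ        => Fmla.Sat M φ ∨ Fmla.Sat M ψ

/-- A partition `S` satisfies `φ` if the set assignment induced by some
partition assignment `J` (mapping variables to sets of blocks) models `φ`. -/
def SatByPartition {V : Type} (S : ZFSet) (φ : Fmla V) : Prop :=
  ∃ J : V → ZFSet, (∀ v, J v ⊆ S) ∧ Fmla.Sat (fun v => ZFSet.sUnion (J v)) φ

/-- BST literals. -/
inductive BSTLit (V : Type) : Type
  | eqUnion (x y z : V)
  | eqDiff  (x y z : V)
  | ne (x y : V)

def BSTLit.Sat {V : Type} (M : V → ZFSet) : BSTLit V → Prop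
  | .eqUnion x y z => M x = M y ∪ M z
  | .eqDiff x y z  => M x = M y \ M z
  | .ne x y        => M x ≠ M y

/-- A map `F : V → pow(pow⁺ V)` fulfills a BST literal. -/
def BSTLit.FulfilledBy {V : Type} (F : V → Set (Set V)) : BSTLit V → Prop
  | .eqUnion x y z => F x = F y ∪ F z
  | .eqDiff x y z  => F x = F y \ F z
  | .ne x y        => F x ≠ F y

/-- BST⊗ literals. -/
inductive Lit (V : Type) : Type
  | eqUnion (x y z : V)
  | eqDiff  (x y z : V)
  | eqUprod (x y z : V)
  | ne (x y : V)

def Lit.Sat {V : Type} (M : V → ZFSet) : Lit V → Prop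
  | .eqUnion x y z => M x = M y ∪ M z
  | .eqDiff x y z  => M x = M y \ M z
  | .eqUprod x y z => (M x).toSet = uprod (M y) (M z)
  | .ne x y        => M x ≠ M y

/-- The nodes over a set of places: nonempty subsets of cardinality at most 2. -/
def NodesOf (P : Type) : Set (Set P) := {A | ∃ p q : P, A = {p, q}}

/-- Unordered product of two sets of places: the set of nodes `{u,v}`, `u ∈ s`, `v ∈ t`. -/
def setUprod {P : Type} (s t : Set P) : Set (Set P) := {A | ∃ u ∈ s, ∃ v ∈ t, A = {u, v}}

/-- Accessibility of a place from the source places, w.r.t. a target map `T`. -/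
inductive Accessible {P : Type} (T : Set P → Set P) : P → Prop
  | source (p : P) (h : ∀ A ∈ NodesOf P, p ∉ T A) : Accessible T p
  | step (p : P) (A : Set P) (hA : A ∈ NodesOf P)
      (hacc : ∀ q ∈ A, Accessible T q) (hp : p ∈ T A) : Accessible T p

/-- Conditions (a), (b), (c1)-(c3) for a literal, w.r.t. a ⊗-graph with target map `T`
and a candidate fulfilling map `F`. -/
def Lit.GraphFulfilled {P V : Type} (T : Set P → Set P) (F : V → Set P) : Lit V → Prop
  | .eqUnion x y z => F x = F y ∪ F z
  | .eqDiff x y z  => F x = F y \ F z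
  | .ne x y        => F x ≠ F y
  | .eqUprod x y z =>
      (∀ υ ∈ F y, ∀ ζ ∈ F z, (T {υ, ζ}).Nonempty ∧ T {υ, ζ} ⊆ F x) ∧
      F x ⊆ (⋃ A ∈ setUprod (F y) (F z), T A) ∧
      (⋃ A ∈ NodesOf P \ setUprod (F y) (F z), T A) ∩ F x = ∅

/-- A ⊗-graph (given by its target map `T`) fulfills the conjunction `Φ` via `F`. -/
def Fulfills {P V : Type} (T : Set P → Set P) (F : V → Set P) (Φ : List (Lit V)) : Prop :=
  ∀ l ∈ Φ, Lit.GraphFulfilled T F l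

/-- `S'` is a ⊗-subpartition of the partition `S`. -/
def OSubpart (S : ZFSet) (S' : Set ZFSet) : Prop :=
  S' ⊆ S.toSet ∧ ∃ B : Set ZFSet,
    (∀ b ∈ B, ∃ p, p ∈ S ∧ ∃ q, q ∈ S ∧ b = ({p, q} : ZFSet)) ∧
    (⋃ c ∈ S', c.toSet) = ⋃ b ∈ B, powAst12 b

/-- `Σ_⊗`: the maximal ⊗-subpartition of `S` (the union of all ⊗-subpartitions). -/
def sigmaOtimes (S : ZFSet) : Set ZFSet := {b | ∃ S', OSubpart S S' ∧ b ∈ S'}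

/-- The target map of the ⊗-graph induced by a partition `S` via the bijection `e`,
relative to the set `Pi` of ⊗-upblocks. -/
def inducedT (S : ZFSet) {P : Type} (e : P ≃ S.toSet) (Pi : Set ZFSet) (A : Set P) :
    Set P :=
  {q | ∃ p₁ p₂ : P, A = {p₁, p₂} ∧ ({(e p₁ : ZFSet), (e p₂ : ZFSet)} : ZFSet) ∈ Pi ∧
    (e q : ZFSet) ∈ sigmaOtimes S ∧
    ((e q : ZFSet).toSet ∩ powAst12 ({(e p₁ : ZFSet), (e p₂ : ZFSet)} : ZFSet)).Nonempty}

/-- `m` is the maximum of `Sp` w.r.t. the strict order `r`. -/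
def IsMaxIn {P : Type} (r : P → P → Prop) (Sp : Set P) (m : P) : Prop :=
  m ∈ Sp ∧ ∀ p ∈ Sp, p = m ∨ r p m

/-- `r` is a topological ⊗-order for the ⊗-graph with target map `T`:
a strict total order on places with `max A ≺ max T(A)` for every ⊗-node `A`. -/
def IsTopOOrder {P : Type} (T : Set P → Set P) (r : P → P → Prop) : Prop :=
  (∀ a, ¬ r a a) ∧ (∀ a b c, r a b → r b c → r a c) ∧ (∀ a b, a ≠ b → r a b ∨ r b a) ∧
  ∀ A ∈ NodesOf P, (T A).Nonempty →
    ∃ m m', IsMaxIn r A m ∧ IsMaxIn r (T A) m' ∧ r m m'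

/-- Hereditarily finite ZFC sets. -/
inductive IsHF : ZFSet → Prop
  | mk (x : ZFSet) (hfin : x.toSet.Finite) (hmem : ∀ y ∈ x, IsHF y) : IsHF x

/-!
The two sides of the equivalence quantify over `ZFSet`s of possibly different universes, so the
heart of the matter is that satisfiability of `φ` does not depend on the universe. Given a model
`M`, take the finitely many sets witnessing the truth values of the atoms of `φ` and close them,
countably, under unordered pairs, under taking the components of a pair, and under choosing a
separating element for any two distinct sets. The Mostowski collapse of this countable set `E`
lands in any universe; since `∈` is extensional on `E`, the collapse is injective on `E` and
commutes with `∪`, `∩`, `\` and with `⊗` on the pairs in `E`, and the witnesses then ensure that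
every atom has the same truth value before and after collapsing.

For a model `M : Fin n → ZFSet` the `2 ^ n - 1` Venn regions indexed by the nonempty `σ ⊆ Fin n`
form the partition, each empty region being replaced by a fresh singleton, and `x` is assigned
the blocks contained in `M x`; their union is `M x` again.
-/

universe u v

theorem _root_.ZFSet.subset_iff_eq_inter {a b : ZFSet.{u}} : a ⊆ b ↔ a = a ∩ b := by
  rw [← ZFSet.coe_subset_coe, ← SetLike.coe_set_eq, ZFSet.coe_inter, Set.left_eq_inter]

theorem _root_.ZFSet.pair_right_injective (a : ZFSet.{u}) :
    Function.Injective fun x : ZFSet.{u} => ({a, x} : ZFSet) := by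
  intro x y h
  have hcoe := congrArg SetLike.coe h
  simp only [ZFSet.coe_insert, ZFSet.coe_singleton, Set.pair_eq_pair_iff] at hcoe
  rcases hcoe with ⟨-, hxy⟩ | ⟨hay, hxa⟩
  exacts [hxy, hxa.trans hay]

theorem _root_.ZFSet.sUnion_sep_subset_eq {S X : ZFSet.{u}}
    (h : ∀ t ∈ X, ∃ b ∈ S, t ∈ b ∧ b ⊆ X) : ZFSet.sUnion (S.sep (· ⊆ X)) = X := by
  ext t
  simp only [ZFSet.mem_sUnion, ZFSet.mem_sep]
  constructor
  · rintro ⟨b, ⟨-, hbX⟩, htb⟩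
    exact hbX htb
  · intro ht
    obtain ⟨b, hbS, htb, hbX⟩ := h t ht
    exact ⟨b, ⟨hbS, hbX⟩, htb⟩

theorem exists_countable_superset_closed {α : Type*} {A : Set α} (hA : A.Countable)
    (F : α → α → Set α) (hF : ∀ a b, (F a b).Countable) :
    ∃ E, A ⊆ E ∧ E.Countable ∧ ∀ a ∈ E, ∀ b ∈ E, F a b ⊆ E := by
  let step (B : Set α) : Set α := B ∪ ⋃ a ∈ B, ⋃ b ∈ B, F a b
  have hmono : Monotone fun k => step^[k] A := monotone_nat_of_le_succ fun k => by
    rw [Function.iterate_succ_apply']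
    exact Set.subset_union_left
  refine ⟨⋃ k, step^[k] A, Set.subset_iUnion (fun k => step^[k] A) 0,
    Set.countable_iUnion fun k => ?_, fun a ha b hb => ?_⟩
  · induction k with
    | zero => exact hA
    | succ k ih =>
      rw [Function.iterate_succ_apply']
      exact ih.union (ih.biUnion fun a _ => ih.biUnion fun b _ => hF a b)
  · obtain ⟨i, hi⟩ := Set.mem_iUnion.1 ha
    obtain ⟨j, hj⟩ := Set.mem_iUnion.1 hb
    have hstep : F a b ⊆ step (step^[max i j] A) :=
      (Set.subset_biUnion_of_mem (u := fun b => F a b) (hmono (le_max_right i j) hj)).trans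
        ((Set.subset_biUnion_of_mem (u := fun a => ⋃ b ∈ step^[max i j] A, F a b)
          (hmono (le_max_left i j) hi)).trans Set.subset_union_right)
    rw [← Function.iterate_succ_apply' step] at hstep
    exact hstep.trans (Set.subset_iUnion (fun k => step^[k] A) _)

section DiffWitness

variable {α : Type*} [Nonempty α]

noncomputable def diffWitness (s t : Set α) : α :=
  Classical.epsilon (· ∈ symmDiff s t)

theorem inter_eq_inter_iff_of_diffWitness_mem {E s t : Set α} (hw : diffWitness s t ∈ E) :
    E ∩ s = E ∩ t ↔ s = t := by
  refine ⟨fun h => ?_, fun h => h ▸ rfl⟩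
  by_contra hst
  have hmem : diffWitness s t ∈ symmDiff s t :=
    Classical.epsilon_spec (Set.symmDiff_nonempty.2 hst)
  have hiff : diffWitness s t ∈ s ↔ diffWitness s t ∈ t := by
    simpa [hw] using Set.ext_iff.1 h (diffWitness s t)
  rw [Set.mem_symmDiff] at hmem
  tauto

end DiffWitness

section Collapse

noncomputable def collapse (E : Set ZFSet.{u}) [Countable E] (a : ZFSet.{u}) : ZFSet.{v} :=
  ZFSet.range fun b : {b : E // (b : ZFSet.{u}) ∈ a} => collapse E b.1
termination_by a
decreasing_by exact b.2

variable {E : Set ZFSet.{u}} [Countable E]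

theorem coe_collapse (a : ZFSet.{u}) :
    (collapse.{u, v} E a : Set ZFSet.{v}) = collapse E '' (E ∩ a) := by
  rw [collapse, ZFSet.coe_range]
  ext x
  simp [and_comm]

theorem mem_collapse {a : ZFSet.{u}} {x : ZFSet.{v}} :
    x ∈ collapse E a ↔ ∃ b ∈ E, b ∈ a ∧ collapse E b = x := by
  rw [← SetLike.mem_coe, coe_collapse]
  simp only [Set.mem_image, Set.mem_inter_iff, SetLike.mem_coe, and_assoc]

theorem collapse_mem_collapse {a b : ZFSet.{u}} (hb : b ∈ E) (hba : b ∈ a) :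
    collapse.{u, v} E b ∈ collapse E a :=
  mem_collapse.2 ⟨b, hb, hba, rfl⟩

theorem collapse_union (a b : ZFSet.{u}) :
    collapse.{u, v} E (a ∪ b) = collapse E a ∪ collapse E b :=
  SetLike.coe_injective <| by
    simp only [coe_collapse, ZFSet.coe_union, Set.inter_union_distrib_left, Set.image_union]

theorem collapse_pair {a b : ZFSet.{u}} (ha : a ∈ E) (hb : b ∈ E) :
    collapse.{u, v} E {a, b} = {collapse E a, collapse E b} :=
  SetLike.coe_injective <| by
    rw [coe_collapse, ZFSet.coe_insert, ZFSet.coe_singleton, ZFSet.coe_insert,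
      ZFSet.coe_singleton, Set.inter_eq_right.2 (Set.pair_subset ha hb), Set.image_pair]

def IsExtensional (E : Set ZFSet.{u}) : Prop :=
  ∀ a ∈ E, ∀ b ∈ E, E ∩ (a : Set ZFSet.{u}) = E ∩ b → a = b

theorem injOn_collapse (hE : IsExtensional E) : Set.InjOn (collapse.{u, v} E) E := by
  intro a
  induction a using ZFSet.inductionOn with
  | _ a ih =>
  intro ha b hb hab
  refine hE a ha b hb (Set.ext fun w => ⟨fun ⟨hwE, hwa⟩ => ⟨hwE, ?_⟩, fun ⟨hwE, hwb⟩ => ⟨hwE, ?_⟩⟩)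
  · obtain ⟨w', hw'E, hw'b, hw'⟩ := mem_collapse.1 (hab ▸ collapse_mem_collapse hwE hwa)
    exact ih w hwa hwE hw'E hw'.symm ▸ hw'b
  · obtain ⟨w', hw'E, hw'a, hw'⟩ := mem_collapse.1 (hab ▸ collapse_mem_collapse hwE hwb)
    exact ih w' hw'a hw'E hwE hw' ▸ hw'a

theorem collapse_eq_collapse_iff (hE : IsExtensional E) {a b : ZFSet.{u}} :
    collapse.{u, v} E a = collapse E b ↔ E ∩ (a : Set ZFSet.{u}) = E ∩ b := by
  rw [← SetLike.coe_set_eq, coe_collapse, coe_collapse,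
    (injOn_collapse hE).image_eq_image_iff Set.inter_subset_left Set.inter_subset_left]

theorem collapse_mem_collapse_iff (hE : IsExtensional E) {a b : ZFSet.{u}} (hb : b ∈ E) :
    collapse.{u, v} E b ∈ collapse E a ↔ b ∈ a := by
  refine ⟨fun h => ?_, collapse_mem_collapse hb⟩
  obtain ⟨b', hb'E, hb'a, hb'⟩ := mem_collapse.1 h
  exact injOn_collapse hE hb'E hb hb' ▸ hb'a

theorem collapse_inter (hE : IsExtensional E) (a b : ZFSet.{u}) :
    collapse.{u, v} E (a ∩ b) = collapse E a ∩ collapse E b := by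
  ext x
  rw [ZFSet.mem_inter, mem_collapse]
  constructor
  · rintro ⟨w, hwE, hw, rfl⟩
    rw [ZFSet.mem_inter] at hw
    exact ⟨collapse_mem_collapse hwE hw.1, collapse_mem_collapse hwE hw.2⟩
  · rintro ⟨hxa, hxb⟩
    obtain ⟨w, hwE, hwa, rfl⟩ := mem_collapse.1 hxa
    exact ⟨w, hwE, ZFSet.mem_inter.2 ⟨hwa, (collapse_mem_collapse_iff hE hwE).1 hxb⟩, rfl⟩

theorem collapse_sdiff (hE : IsExtensional E) (a b : ZFSet.{u}) :
    collapse.{u, v} E (a \ b) = collapse E a \ collapse E b := by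
  ext x
  rw [ZFSet.mem_sdiff, mem_collapse]
  constructor
  · rintro ⟨w, hwE, hw, rfl⟩
    rw [ZFSet.mem_sdiff] at hw
    exact ⟨collapse_mem_collapse hwE hw.1, (collapse_mem_collapse_iff hE hwE).not.2 hw.2⟩
  · rintro ⟨hxa, hxb⟩
    obtain ⟨w, hwE, hwa, rfl⟩ := mem_collapse.1 hxa
    rw [collapse_mem_collapse_iff hE hwE] at hxb
    exact ⟨w, hwE, ZFSet.mem_sdiff.2 ⟨hwa, hxb⟩, rfl⟩

def IsPairClosed (E : Set ZFSet.{u}) : Prop :=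
  ∀ a b : ZFSet.{u}, ({a, b} : ZFSet) ∈ E ↔ a ∈ E ∧ b ∈ E

theorem image_collapse_inter_uprod (hP : IsPairClosed E) (Y Z : ZFSet.{u}) :
    collapse.{u, v} E '' (E ∩ uprod Y Z) = uprod (collapse E Y) (collapse E Z) := by
  ext x
  constructor
  · rintro ⟨t, ⟨htE, a, ha, b, hb, rfl⟩, rfl⟩
    obtain ⟨haE, hbE⟩ := (hP a b).1 htE
    exact ⟨_, collapse_mem_collapse haE ha, _, collapse_mem_collapse hbE hb, collapse_pair haE hbE⟩
  · rintro ⟨_, hα, _, hβ, rfl⟩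
    obtain ⟨a, haE, ha, rfl⟩ := mem_collapse.1 hα
    obtain ⟨b, hbE, hb, rfl⟩ := mem_collapse.1 hβ
    exact ⟨{a, b}, ⟨(hP a b).2 ⟨haE, hbE⟩, a, ha, b, hb, rfl⟩, collapse_pair haE hbE⟩

theorem collapse_eq_uprod_iff (hE : IsExtensional E) (hP : IsPairClosed E) {X Y Z : ZFSet.{u}} :
    (collapse.{u, v} E X).toSet = uprod (collapse E Y) (collapse E Z) ↔
      E ∩ X.toSet = E ∩ uprod Y Z := by
  change (collapse E X : Set ZFSet.{v}) = _ ↔ _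
  rw [coe_collapse, ← image_collapse_inter_uprod hP]
  exact (injOn_collapse hE).image_eq_image_iff Set.inter_subset_left Set.inter_subset_left

theorem collapse_eq_collapse_iff_of_diffWitness_mem (hE : IsExtensional E) {a b : ZFSet.{u}}
    (hw : diffWitness (a : Set ZFSet.{u}) b ∈ E) : collapse.{u, v} E a = collapse E b ↔ a = b := by
  rw [collapse_eq_collapse_iff hE, inter_eq_inter_iff_of_diffWitness_mem hw, SetLike.coe_set_eq]

end Collapse

noncomputable def witnesses {V : Type} (M : V → ZFSet.{u}) : Fmla V → Set ZFSet.{u}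
  | .eqUnion x y z => {diffWitness (M x : Set ZFSet.{u}) ↑(M y ∪ M z)}
  | .eqInter x y z => {diffWitness (M x : Set ZFSet.{u}) ↑(M y ∩ M z)}
  | .eqDiff x y z => {diffWitness (M x : Set ZFSet.{u}) ↑(M y \ M z)}
  | .eqUprod x y z => {diffWitness (M x).toSet (uprod (M y) (M z))}
  | .subset x y => {diffWitness (M x : Set ZFSet.{u}) ↑(M x ∩ M y)}
  | .not φ => witnesses M φ
  | .and φ ψ => witnesses M φ ∪ witnesses M ψ
  | .or φ ψ => witnesses M φ ∪ witnesses M ψ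

theorem finite_witnesses {V : Type} (M : V → ZFSet.{u}) (φ : Fmla V) :
    (witnesses M φ).Finite := by
  induction φ <;> simp [witnesses, *]

theorem sat_collapse_iff {E : Set ZFSet.{u}} [Countable E] (hE : IsExtensional E)
    (hP : IsPairClosed E) {V : Type} {M : V → ZFSet.{u}} {φ : Fmla V}
    (hw : witnesses M φ ⊆ E) :
    Fmla.Sat (fun x => collapse.{u, v} E (M x)) φ ↔ Fmla.Sat M φ := by
  induction φ with
  | eqUnion x y z =>
    rw [Fmla.Sat, Fmla.Sat, ← collapse_union]
    exact collapse_eq_collapse_iff_of_diffWitness_mem hE (hw rfl)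
  | eqInter x y z =>
    rw [Fmla.Sat, Fmla.Sat, ← collapse_inter hE]
    exact collapse_eq_collapse_iff_of_diffWitness_mem hE (hw rfl)
  | eqDiff x y z =>
    rw [Fmla.Sat, Fmla.Sat, ← collapse_sdiff hE]
    exact collapse_eq_collapse_iff_of_diffWitness_mem hE (hw rfl)
  | eqUprod x y z =>
    rw [Fmla.Sat, Fmla.Sat, collapse_eq_uprod_iff hE hP]
    exact inter_eq_inter_iff_of_diffWitness_mem (hw rfl)
  | subset x y =>
    rw [Fmla.Sat, Fmla.Sat, ZFSet.subset_iff_eq_inter, ← collapse_inter hE,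
      collapse_eq_collapse_iff_of_diffWitness_mem hE (hw rfl), ← ZFSet.subset_iff_eq_inter]
  | not φ ih => exact not_congr (ih hw)
  | and φ ψ ihφ ihψ =>
    exact and_congr (ihφ (Set.union_subset_iff.1 hw).1) (ihψ (Set.union_subset_iff.1 hw).2)
  | or φ ψ ihφ ihψ =>
    exact or_congr (ihφ (Set.union_subset_iff.1 hw).1) (ihψ (Set.union_subset_iff.1 hw).2)

theorem countable_pairComponents (a : ZFSet.{u}) :
    {c | c ∈ a ∧ ∃ x y, a = ({x, y} : ZFSet)}.Countable := by
  by_cases ha : ∃ x y, a = ({x, y} : ZFSet)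
  · obtain ⟨x, y, rfl⟩ := ha
    refine (Set.toFinite ({x, y} : Set ZFSet.{u})).countable.mono fun c hc => ?_
    simpa using hc.1
  · simp [ha]

theorem exists_countable_extensional_pairClosed_superset {A : Set ZFSet.{u}}
    (hA : A.Countable) :
    ∃ E, A ⊆ E ∧ E.Countable ∧ IsExtensional E ∧ IsPairClosed E := by
  obtain ⟨E, hAE, hEc, hE⟩ := exists_countable_superset_closed hA
    (fun a b => {diffWitness (a : Set ZFSet.{u}) b, {a, b}} ∪
      {c | c ∈ a ∧ ∃ x y, a = ({x, y} : ZFSet)})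
    (fun a b => ((Set.toFinite _).countable).union (countable_pairComponents a))
  refine ⟨E, hAE, hEc, fun a ha b hb hab => ?_, fun a b => ⟨fun hab => ?_, fun ⟨ha, hb⟩ => ?_⟩⟩
  · exact SetLike.coe_injective ((inter_eq_inter_iff_of_diffWitness_mem
      (hE a ha b hb (Or.inl (Set.mem_insert _ _)))).1 hab)
  · have hcomp : ∀ c ∈ ({a, b} : ZFSet), c ∈ E := fun c hc =>
      hE _ hab _ hab (Or.inr ⟨hc, a, b, rfl⟩)
    exact ⟨hcomp a (by simp), hcomp b (by simp)⟩
  · exact hE a ha b hb (Or.inl (Set.mem_insert_of_mem _ rfl))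

theorem Fmla.exists_sat_of_sat {V : Type} {φ : Fmla V} {M : V → ZFSet.{u}}
    (h : Fmla.Sat M φ) : ∃ M' : V → ZFSet.{v}, Fmla.Sat M' φ := by
  obtain ⟨E, hwE, hEc, hE, hP⟩ :=
    exists_countable_extensional_pairClosed_superset (finite_witnesses M φ).countable
  have := hEc.to_subtype
  exact ⟨fun x => collapse E (M x), (sat_collapse_iff hE hP hwE).2 h⟩

section Venn

variable {n : ℕ} (M : Fin n → ZFSet.{u})

open Classical in
noncomputable def vennIndex (t : ZFSet.{u}) : Finset (Fin n) := {i | t ∈ M i}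

noncomputable def vennRegion (σ : Finset (Fin n)) : ZFSet.{u} :=
  (ZFSet.iUnion M).sep (vennIndex M · = σ)

/-- Contains `⋃ i, M i`, hence lies in no `M i`; the ordinal `encode σ` tells the dummies
apart. -/
noncomputable def vennDummy (σ : Finset (Fin n)) : ZFSet.{u} :=
  {ZFSet.iUnion M, (Encodable.encode σ : Ordinal.{u}).toZFSet}

open Classical in
noncomputable def vennBlock (σ : Finset (Fin n)) : ZFSet.{u} :=
  if vennRegion M σ = ∅ then {vennDummy M σ} else vennRegion M σ

noncomputable def vennPartition : ZFSet.{u} :=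
  ZFSet.range fun σ : {σ : Finset (Fin n) // σ.Nonempty} => vennBlock M σ

variable {M}

theorem mem_vennIndex {t : ZFSet.{u}} {i : Fin n} : i ∈ vennIndex M t ↔ t ∈ M i := by
  simp [vennIndex]

theorem mem_vennRegion {t : ZFSet.{u}} {σ : Finset (Fin n)} :
    t ∈ vennRegion M σ ↔ (∃ i, t ∈ M i) ∧ vennIndex M t = σ := by
  rw [vennRegion, ZFSet.mem_sep, ZFSet.mem_iUnion]

theorem vennDummy_notMem {σ : Finset (Fin n)} {i : Fin n} : vennDummy M σ ∉ M i := fun h =>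
  ZFSet.mem_asymm (ZFSet.mem_insert _ _) (ZFSet.mem_iUnion.2 ⟨i, h⟩)

theorem vennDummy_injective : Function.Injective (vennDummy M) :=
  (ZFSet.pair_right_injective _).comp <| Ordinal.toZFSet_injective.comp <|
    Nat.cast_injective.comp Encodable.encode_injective

theorem mem_vennBlock {t : ZFSet.{u}} {σ : Finset (Fin n)} (ht : t ∈ vennBlock M σ) :
    t ∈ vennRegion M σ ∨ t = vennDummy M σ := by
  unfold vennBlock at ht
  split_ifs at ht
  · exact Or.inr (ZFSet.mem_singleton.1 ht)
  · exact Or.inl ht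

theorem eq_of_mem_vennBlock {t : ZFSet.{u}} {σ τ : Finset (Fin n)} (hσ : t ∈ vennBlock M σ)
    (hτ : t ∈ vennBlock M τ) : σ = τ := by
  rcases mem_vennBlock hσ with hσ | rfl <;> rcases mem_vennBlock hτ with hτ | hτ
  · exact (mem_vennRegion.1 hσ).2.symm.trans (mem_vennRegion.1 hτ).2
  · obtain ⟨i, hi⟩ := (mem_vennRegion.1 hσ).1
    exact absurd (hτ ▸ hi) vennDummy_notMem
  · obtain ⟨i, hi⟩ := (mem_vennRegion.1 hτ).1
    exact absurd hi vennDummy_notMem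
  · exact vennDummy_injective hτ

theorem vennBlock_nonempty (σ : Finset (Fin n)) : (vennBlock M σ).Nonempty := by
  unfold vennBlock
  split_ifs with h
  · exact ⟨_, ZFSet.mem_singleton.2 rfl⟩
  · exact (ZFSet.eq_empty_or_nonempty _).resolve_left h

theorem vennBlock_injective : Function.Injective (vennBlock M) := fun σ _ h =>
  let ⟨_, ht⟩ := vennBlock_nonempty σ
  eq_of_mem_vennBlock ht (h ▸ ht)

theorem mem_vennBlock_vennIndex_subset {t : ZFSet.{u}} {i : Fin n} (ht : t ∈ M i) :
    t ∈ vennBlock M (vennIndex M t) ∧ vennBlock M (vennIndex M t) ⊆ M i := by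
  have htr : t ∈ vennRegion M (vennIndex M t) := mem_vennRegion.2 ⟨⟨i, ht⟩, rfl⟩
  have hne : vennRegion M (vennIndex M t) ≠ ∅ := fun h => ZFSet.notMem_empty t (h ▸ htr)
  rw [vennBlock, if_neg hne]
  refine ⟨htr, fun s hs => ?_⟩
  rw [← mem_vennIndex, (mem_vennRegion.1 hs).2, mem_vennIndex]
  exact ht

theorem isPartition_vennPartition : IsPartition (vennPartition M) := by
  simp only [IsPartition, vennPartition, ZFSet.mem_range]
  refine ⟨?_, ?_⟩
  · rintro _ ⟨σ, rfl⟩ h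
    obtain ⟨t, ht⟩ := vennBlock_nonempty (M := M) σ
    exact ZFSet.notMem_empty t (h ▸ ht)
  · rintro _ ⟨σ, rfl⟩ _ ⟨τ, rfl⟩ hne t hσ hτ
    exact hne (congrArg (vennBlock M) (eq_of_mem_vennBlock hσ hτ))

theorem coe_vennPartition :
    (vennPartition M : Set ZFSet.{u}) = vennBlock M '' {σ | σ.Nonempty} := by
  rw [vennPartition, ZFSet.coe_range, ← Subtype.range_val_subtype (p := Finset.Nonempty),
    ← Set.range_comp]
  rfl

theorem finite_vennPartition : (vennPartition M).toSet.Finite := by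
  change (vennPartition M : Set ZFSet.{u}).Finite
  rw [coe_vennPartition]
  exact Set.toFinite _

theorem ncard_vennPartition : (vennPartition M).toSet.ncard = 2 ^ n - 1 := by
  have hnonempty : {σ : Finset (Fin n) | σ.Nonempty} = Set.univ \ {∅} := by
    ext σ
    simp [Finset.nonempty_iff_ne_empty]
  change (vennPartition M : Set ZFSet.{u}).ncard = _
  rw [coe_vennPartition, Set.ncard_image_of_injective _ vennBlock_injective, hnonempty,
    Set.ncard_sdiff_singleton_of_mem (Set.mem_univ _), Set.ncard_univ, Nat.card_eq_fintype_card,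
    Fintype.card_finset, Fintype.card_fin]

theorem satByPartition_vennPartition {φ : Fmla (Fin n)} (h : Fmla.Sat M φ) :
    SatByPartition (vennPartition M) φ := by
  refine ⟨fun i => (vennPartition M).sep (· ⊆ M i), fun i => ZFSet.sep_subset, ?_⟩
  convert h using 2 with i
  exact ZFSet.sUnion_sep_subset_eq fun t ht => ⟨_,
    ZFSet.mem_range.2 ⟨⟨_, i, mem_vennIndex.2 ht⟩, rfl⟩, mem_vennBlock_vennIndex_subset ht⟩

end Venn

/-- a BST⊗-formula with `n` distinct variables is satisfiable iff
it is satisfied by some partition with `2^n - 1` blocks. -/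
theorem stmt1 {n : ℕ} (φ : Fmla (Fin n)) :
    (∃ M : Fin n → ZFSet, Fmla.Sat M φ) ↔
      ∃ S : ZFSet, IsPartition S ∧ S.toSet.Finite ∧ S.toSet.ncard = 2 ^ n - 1 ∧
        SatByPartition S φ := by
  constructor
  · rintro ⟨M, hM⟩
    obtain ⟨M', hM'⟩ := Fmla.exists_sat_of_sat hM
    exact ⟨vennPartition M', isPartition_vennPartition, finite_vennPartition,
      ncard_vennPartition, satByPartition_vennPartition hM'⟩
  · rintro ⟨S, -, -, -, J, -, hJ⟩
    exact Fmla.exists_sat_of_sat hJ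

end BSTO
end

section
/- Let Σ be a partition and let 𝔍 : V → pow(Σ) be a partition assignment over a finite set V of variables. Then for all x, y, z ∈ V and for ⋆ ∈ {∪, \}: ⋃𝔍(x) = ⋃𝔍(y) ⋆ ⋃𝔍(z) holds if and only if 𝔍(x) = 𝔍(y) ⋆ 𝔍(z). -/
namespace BSTO

/-!
Blocks of a partition are nonempty and pairwise disjoint, so an element of a block `b` lies in
`⋃A` for a family `A` of blocks exactly when `b ∈ A`. Hence `⋃` is injective on families of
blocks and commutes with `∪` and `\` on them, which turns `⋃J(x) = ⋃J(y) ⋆ ⋃J(z)` into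
`⋃J(x) = ⋃(J(y) ⋆ J(z))` and then into `J(x) = J(y) ⋆ J(z)`.
-/

open scoped ZFSet

theorem _root_.ZFSet.sUnion_union (A B : ZFSet) : ⋃₀ (A ∪ B) = ⋃₀ A ∪ ⋃₀ B := by
  ext t
  simp only [ZFSet.mem_union, ZFSet.mem_sUnion, or_and_right, exists_or]

namespace IsPartition

variable {S : ZFSet} (hS : IsPartition S)
include hS

theorem eq_of_mem_of_mem {b c t : ZFSet} (hb : b ∈ S) (hc : c ∈ S) (htb : t ∈ b)
    (htc : t ∈ c) : b = c :=
  by_contra fun hbc => hS.2 b hb c hc hbc t htb htc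

theorem exists_mem {b : ZFSet} (hb : b ∈ S) : ∃ t, t ∈ b := by
  by_contra! h
  exact hS.1 b hb ((ZFSet.eq_empty b).mpr h)

theorem mem_sUnion_iff {A b t : ZFSet} (hA : A ⊆ S) (hb : b ∈ S) (htb : t ∈ b) :
    t ∈ ⋃₀ A ↔ b ∈ A := by
  refine ⟨fun ht => ?_, fun hbA => ZFSet.mem_sUnion_of_mem htb hbA⟩
  obtain ⟨c, hcA, htc⟩ := ZFSet.mem_sUnion.mp ht
  rwa [hS.eq_of_mem_of_mem hb (hA hcA) htb htc]

theorem subset_of_sUnion_subset {A B : ZFSet} (hA : A ⊆ S) (hB : B ⊆ S) (h : ⋃₀ A ⊆ ⋃₀ B) :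
    A ⊆ B := by
  intro b hbA
  obtain ⟨t, htb⟩ := hS.exists_mem (hA hbA)
  exact (hS.mem_sUnion_iff hB (hA hbA) htb).mp (h (ZFSet.mem_sUnion_of_mem htb hbA))

theorem sUnion_inj {A B : ZFSet} (hA : A ⊆ S) (hB : B ⊆ S) : ⋃₀ A = ⋃₀ B ↔ A = B :=
  ⟨fun h => le_antisymm (hS.subset_of_sUnion_subset hA hB h.le)
    (hS.subset_of_sUnion_subset hB hA h.ge), congrArg _⟩

theorem sUnion_sdiff {A B : ZFSet} (hA : A ⊆ S) (hB : B ⊆ S) :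
    ⋃₀ (A \ B) = ⋃₀ A \ ⋃₀ B := by
  ext t
  simp only [ZFSet.mem_sdiff, ZFSet.mem_sUnion]
  constructor
  · rintro ⟨b, ⟨hbA, hbB⟩, htb⟩
    refine ⟨⟨b, hbA, htb⟩, fun htB => hbB ?_⟩
    exact (hS.mem_sUnion_iff hB (hA hbA) htb).mp (ZFSet.mem_sUnion.mpr htB)
  · rintro ⟨⟨b, hbA, htb⟩, htB⟩
    exact ⟨b, ⟨hbA, fun hbB => htB ⟨b, hbB, htb⟩⟩, htb⟩

end IsPartition

theorem stmt2_general {V : Type} (S : ZFSet) (hS : IsPartition S)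
    (J : V → ZFSet) (hJ : ∀ v, J v ⊆ S) (x y z : V) :
    (ZFSet.sUnion (J x) = ZFSet.sUnion (J y) ∪ ZFSet.sUnion (J z) ↔ J x = J y ∪ J z) ∧
    (ZFSet.sUnion (J x) = ZFSet.sUnion (J y) \ ZFSet.sUnion (J z) ↔ J x = J y \ J z) := by
  have hunion : J y ∪ J z ⊆ S := fun b hb => (ZFSet.mem_union.mp hb).elim (hJ y ·) (hJ z ·)
  have hsdiff : J y \ J z ⊆ S := fun b hb => hJ y (ZFSet.mem_sdiff.mp hb).1
  rw [← ZFSet.sUnion_union, ← hS.sUnion_sdiff (hJ y) (hJ z)]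
  exact ⟨hS.sUnion_inj (hJ x) hunion, hS.sUnion_inj (hJ x) hsdiff⟩

/-- for a partition assignment `J` over a finite set of variables,
`⋃J(x) = ⋃J(y) ⋆ ⋃J(z)` iff `J(x) = J(y) ⋆ J(z)`, for `⋆ ∈ {∪, \}`. -/
theorem stmt2 {V : Type} [Finite V] (S : ZFSet) (hS : IsPartition S)
    (J : V → ZFSet) (hJ : ∀ v, J v ⊆ S) (x y z : V) :
    (ZFSet.sUnion (J x) = ZFSet.sUnion (J y) ∪ ZFSet.sUnion (J z) ↔ J x = J y ∪ J z) ∧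
    (ZFSet.sUnion (J x) = ZFSet.sUnion (J y) \ ZFSet.sUnion (J z) ↔ J x = J y \ J z) :=
  stmt2_general S hS J hJ x y z

end BSTO
end

section
/- A BST-conjunction involving n distinct variables is satisfiable if and only if it is satisfied by every partition of size n − 1. -/
/-!
A model `M` of the conjunction takes at most `n` distinct values, and `k` distinct sets are
pairwise told apart by their traces on some `k - 1` points. Send these points injectively to
blocks of the partition and each `M v` to the union of the blocks of its points: since blocks
are pairwise disjoint this preserves `∪` and `\`, and since they are nonempty it preserves `≠`.
Conversely, the assignment induced by a partition is itself a model.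
-/

namespace BSTO

open ZFSet
open scoped Finset

universe u w

theorem _root_.Set.InjOn.inter_mono {α : Type*} {C : Set (Set α)} {W W' : Set α} (hWW' : W ⊆ W')
    (h : Set.InjOn (· ∩ W) C) : Set.InjOn (· ∩ W') C := fun x hx y hy hxy => h hx hy <| by
  simpa only [Set.inter_assoc, Set.inter_eq_right.2 hWW'] using congrArg (· ∩ W) hxy

theorem exists_card_le_injOn_inter {α : Type*} (C : Finset (Set α)) :
    ∃ W : Finset α, #W ≤ #C - 1 ∧ Set.InjOn (· ∩ (W : Set α)) C := by
  classical
  induction C using Finset.induction_on with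
  | empty => exact ⟨∅, by simp, by simp⟩
  | insert c C hc ih =>
    obtain ⟨W, hcard, hinj⟩ := ih
    rw [Finset.card_insert_of_notMem hc, Finset.coe_insert]
    -- `c` can clash on `W` with at most one `d ∈ C`; one point of `c ∆ d` resolves that clash.
    by_cases hclash : ∃ d ∈ C, c ∩ W = d ∩ W
    · obtain ⟨d, hd, hcd⟩ := hclash
      obtain ⟨a, ha⟩ : ∃ a, ¬(a ∈ c ↔ a ∈ d) := by
        by_contra! h
        exact hc (Set.ext h ▸ hd)
      have hC : 0 < #C := Finset.card_pos.2 ⟨d, hd⟩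
      have hW : W ⊆ insert a W := Finset.subset_insert a W
      refine ⟨insert a W, by grind [Finset.card_insert_le], ?_⟩
      refine (Set.injOn_insert (by exact_mod_cast hc)).2 ⟨hinj.inter_mono (by simp), ?_⟩
      rintro ⟨y, hy, hyc⟩
      obtain rfl : y = d := hinj hy hd <| by
        show y ∩ W = d ∩ W
        rw [← hcd]
        simpa only [Set.inter_assoc, Set.inter_eq_right.2 (Finset.coe_subset.2 hW)]
          using congrArg (· ∩ (W : Set α)) hyc
      exact ha (by simpa using congrArg (a ∈ ·) hyc.symm)
    · push Not at hclash
      refine ⟨W, by omega, (Set.injOn_insert (by exact_mod_cast hc)).2 ⟨hinj, ?_⟩⟩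
      rintro ⟨y, hy, hyc⟩
      exact hclash y hy hyc.symm

theorem _root_.ZFSet.sUnion_union_s6 (x y : ZFSet.{u}) : ⋃₀ (x ∪ y) = ⋃₀ x ∪ ⋃₀ y := by
  ext t
  simp only [mem_sUnion, mem_union, or_and_right, exists_or]

namespace IsPartition

variable {S K L : ZFSet.{u}}

theorem mem_sUnion_iff_s6 (hS : IsPartition S) (hK : K ⊆ S) {b t : ZFSet.{u}} (hb : b ∈ S)
    (ht : t ∈ b) : t ∈ ⋃₀ K ↔ b ∈ K := by
  refine ⟨fun htK => ?_, fun hbK => mem_sUnion_of_mem ht hbK⟩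
  obtain ⟨c, hc, htc⟩ := mem_sUnion.1 htK
  by_contra hbK
  exact hS.2 b hb c (hK hc) (by rintro rfl; exact hbK hc) t ht htc

theorem sUnion_sdiff_s6 (hS : IsPartition S) (hK : K ⊆ S) (hL : L ⊆ S) :
    ⋃₀ (K \ L) = ⋃₀ K \ ⋃₀ L := by
  ext t
  simp only [mem_sdiff, mem_sUnion]
  constructor
  · rintro ⟨b, ⟨hbK, hbL⟩, htb⟩
    exact ⟨⟨b, hbK, htb⟩, by rwa [← mem_sUnion, hS.mem_sUnion_iff_s6 hL (hK hbK) htb]⟩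
  · rintro ⟨⟨b, hbK, htb⟩, htL⟩
    rw [← mem_sUnion, hS.mem_sUnion_iff_s6 hL (hK hbK) htb] at htL
    exact ⟨b, ⟨hbK, htL⟩, htb⟩

theorem sUnion_injOn (hS : IsPartition S) : Set.InjOn sUnion {K | K ⊆ S} := by
  suffices ∀ K L, K ⊆ S → L ⊆ S → ⋃₀ K = ⋃₀ L → K ⊆ L from
    fun K hK L hL h => ZFSet.ext fun b => ⟨(this K L hK hL h ·), (this L K hL hK h.symm ·)⟩
  intro K L hK hL h b hbK
  obtain ⟨t, ht⟩ := (nonempty_def b).1 ((eq_empty_or_nonempty b).resolve_left (hS.1 b (hK hbK)))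
  rw [← hS.mem_sUnion_iff_s6 hL (hK hbK) ht, ← h]
  exact mem_sUnion_of_mem ht hbK

end IsPartition

theorem isPartition_range_singleton {ι : Type*} [Small.{u} ι] (f : ι → ZFSet.{u}) :
    IsPartition (range fun i => {f i}) := by
  refine ⟨?_, ?_⟩
  · intro b hb h
    obtain ⟨i, rfl⟩ := mem_range.1 hb
    exact not_nonempty_empty (h ▸ singleton_nonempty (f i))
  · intro b hb c hc hbc t htb htc
    obtain ⟨i, rfl⟩ := mem_range.1 hb
    obtain ⟨j, rfl⟩ := mem_range.1 hc
    rw [mem_singleton] at htb htc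
    exact hbc (by rw [← htb, ← htc])

theorem exists_isPartition_ncard (m : ℕ) :
    ∃ S : ZFSet.{u}, IsPartition S ∧ S.toSet.Finite ∧ S.toSet.ncard = m := by
  set f : Fin m → ZFSet.{u} := fun i => {((i : ℕ) : Ordinal.{u}).toZFSet}
  have hf : Function.Injective f :=
    singleton_injective.comp <| Ordinal.toZFSet_injective.comp <|
      Nat.cast_injective.comp Fin.val_injective
  refine ⟨range f, isPartition_range_singleton _, ?_, ?_⟩
  · change (range f : Set ZFSet).Finite
    rw [coe_range]
    exact Set.finite_range f
  · change (range f : Set ZFSet).ncard = m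
    rw [coe_range, Set.ncard_range_of_injective hf, Nat.card_eq_fintype_card, Fintype.card_fin]

section blocksOf

variable {ι : Type*} {S : ZFSet.{w}} {p : ι → ZFSet.{u}} {e : ι → ZFSet.{w}} {X Y : ZFSet.{u}}

variable (S p e) in
def blocksOf (X : ZFSet.{u}) : ZFSet.{w} := S.sep fun b => ∃ i, p i ∈ X ∧ e i = b

theorem mem_blocksOf {b : ZFSet.{w}} : b ∈ blocksOf S p e X ↔ b ∈ S ∧ ∃ i, p i ∈ X ∧ e i = b :=
  mem_sep

theorem blocksOf_subset : blocksOf S p e X ⊆ S := sep_subset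

theorem blocksOf_union : blocksOf S p e (X ∪ Y) = blocksOf S p e X ∪ blocksOf S p e Y := by
  ext b
  simp only [mem_blocksOf, mem_union, or_and_right, exists_or, and_or_left]

theorem blocksOf_sdiff (he : Function.Injective e) :
    blocksOf S p e (X \ Y) = blocksOf S p e X \ blocksOf S p e Y := by
  ext b
  simp only [mem_blocksOf, mem_sdiff]
  constructor
  · rintro ⟨hb, i, ⟨hX, hY⟩, rfl⟩
    exact ⟨⟨hb, i, hX, rfl⟩, fun ⟨_, j, hj, hji⟩ => hY (he hji ▸ hj)⟩
  · rintro ⟨⟨hb, i, hX, rfl⟩, hY⟩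
    exact ⟨hb, i, ⟨hX, fun hi => hY ⟨hb, i, hi, rfl⟩⟩, rfl⟩

theorem apply_mem_blocksOf_iff (he : Function.Injective e) (heS : ∀ i, e i ∈ S) (i : ι) :
    e i ∈ blocksOf S p e X ↔ p i ∈ X := by
  simp [mem_blocksOf, heS i, he.eq_iff]

end blocksOf

theorem BSTLit.Sat.map {V : Type} {M : V → ZFSet.{u}} {f : ZFSet.{u} → ZFSet.{w}}
    (hunion : ∀ x y, f (x ∪ y) = f x ∪ f y) (hsdiff : ∀ x y, f (x \ y) = f x \ f y)
    (hinj : Set.InjOn f (Set.range M)) : ∀ {l : BSTLit V}, l.Sat M → l.Sat (f ∘ M)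
  | .eqUnion .., h => (congrArg f h).trans (hunion _ _)
  | .eqDiff .., h => (congrArg f h).trans (hsdiff _ _)
  | .ne x y, h => fun hxy => h (hinj ⟨x, rfl⟩ ⟨y, rfl⟩ hxy)

theorem exists_partitionAssignment {V : Type} [Fintype V] (M : V → ZFSet.{u}) {S : ZFSet.{w}}
    (hS : IsPartition S) (hfin : S.toSet.Finite) (hcard : Fintype.card V - 1 ≤ S.toSet.ncard) :
    ∃ J : V → ZFSet.{w}, (∀ v, J v ⊆ S) ∧ ∀ l : BSTLit V, l.Sat M → l.Sat fun v => ⋃₀ J v := by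
  classical
  obtain ⟨W, hWcard, hW⟩ :=
    exists_card_le_injOn_inter (Finset.univ.image fun v => (M v : Set ZFSet.{u}))
  have hvalues : #(Finset.univ.image fun v => (M v : Set ZFSet.{u})) ≤ Fintype.card V :=
    Finset.card_image_le
  have hWS : Fintype.card W ≤ #hfin.toFinset := by
    rw [Fintype.card_coe, ← Set.ncard_eq_toFinset_card _ hfin]
    omega
  obtain ⟨e, he⟩ := Function.Embedding.exists_of_card_le_finset hWS
  have heS : ∀ i, e i ∈ S := fun i => hfin.mem_toFinset.1 (he ⟨i, rfl⟩)
  refine ⟨fun v => blocksOf S Subtype.val e (M v), fun v => blocksOf_subset,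
    fun l => BSTLit.Sat.map (f := fun X => ⋃₀ blocksOf S Subtype.val e X) ?_ ?_ ?_⟩
  · intro X Y
    simp only [blocksOf_union, sUnion_union_s6]
  · intro X Y
    simp only [blocksOf_sdiff e.injective, hS.sUnion_sdiff_s6 blocksOf_subset blocksOf_subset]
  · rintro _ ⟨x, rfl⟩ _ ⟨y, rfl⟩ hxy
    have hblocks := hS.sUnion_injOn blocksOf_subset blocksOf_subset hxy
    have htrace : (M x : Set ZFSet.{u}) ∩ W = (M y : Set ZFSet.{u}) ∩ W := by
      ext a
      refine and_congr_left fun ha => ?_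
      have h := apply_mem_blocksOf_iff (p := Subtype.val) (X := M x) e.injective heS ⟨a, ha⟩
      rw [hblocks, apply_mem_blocksOf_iff e.injective heS] at h
      exact h.symm
    exact SetLike.coe_injective (hW (by simp) (by simp) htrace)

/-- a BST-conjunction with `n` distinct variables is satisfiable iff
it is satisfied by every partition of size `n - 1`. -/
theorem stmt6 {n : ℕ} (Φ : List (BSTLit (Fin n))) :
    (∃ M : Fin n → ZFSet, ∀ l ∈ Φ, BSTLit.Sat M l) ↔
      ∀ S : ZFSet, IsPartition S → S.toSet.Finite → S.toSet.ncard = n - 1 →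
        ∃ J : Fin n → ZFSet, (∀ v, J v ⊆ S) ∧
          ∀ l ∈ Φ, BSTLit.Sat (fun v => ZFSet.sUnion (J v)) l := by
  refine ⟨fun ⟨M, hM⟩ S hS hfin hcard => ?_, fun h => ?_⟩
  · obtain ⟨J, hJS, hJ⟩ := exists_partitionAssignment M hS hfin (by simp [hcard])
    exact ⟨J, hJS, fun l hl => hJ l (hM l hl)⟩
  · obtain ⟨S, hS, hfin, hcard⟩ := exists_isPartition_ncard (n - 1)
    obtain ⟨J, -, hJ⟩ := h S hS hfin hcard
    -- `M` may live in another universe than the partitions, so transfer once more.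
    obtain ⟨S', hS', hfin', hcard'⟩ := exists_isPartition_ncard (n - 1)
    obtain ⟨J', -, hJ'⟩ :=
      exists_partitionAssignment (fun v => ⋃₀ J v) hS' hfin' (by simp [hcard'])
    exact ⟨fun v => ⋃₀ J' v, fun l hl => hJ' l (hJ l hl)⟩

end BSTO
end

section
/- A BST-conjunction over a finite set V of variables is satisfiable if and only if it is fulfilled by a map 𝔉 : V → pow(pow⁺(V)) such that the cardinality of ⋃𝔉[V] (the set of all blocks used by 𝔉) is at most |V| − 1. -/
namespace BSTO

/-
The Venn region of an element `t` is the set of variables whose value contains `t`. A conjunction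
of BST-literals only sees which regions occur: `x = y ∪ z` and `x = y \ z` are constraints on
each region separately, and `x ≠ y` asks for a region containing exactly one of `x`, `y`. A model
therefore yields the fulfilling map `v ↦ {A ∈ R | v ∈ A}` for its family `R` of regions, and `R`
can be shrunk to at most `|V| - 1` regions keeping every distinction between variables: splitting
`V` along one separating region and recursing on both parts costs `1 + (a - 1) + (b - 1)` regions
for `a + b` variables. Conversely, a fulfilling map becomes a model once its blocks are replaced
by pairwise distinct sets.
-/

universe u v w

section

variable {V : Type} {α : Type u} {β : Type v}

def BSTLit.Holds (M : V → Set α) : BSTLit V → Prop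
  | .eqUnion x y z => M x = M y ∪ M z
  | .eqDiff x y z  => M x = M y \ M z
  | .ne x y        => M x ≠ M y

def AgreeOn (R : Set (Set V)) (x y : V) : Prop :=
  ∀ A ∈ R, (x ∈ A ↔ y ∈ A)

def BSTLit.HoldsOnRegions (R : Set (Set V)) : BSTLit V → Prop
  | .eqUnion x y z => ∀ A ∈ R, (x ∈ A ↔ y ∈ A ∨ z ∈ A)
  | .eqDiff x y z  => ∀ A ∈ R, (x ∈ A ↔ y ∈ A ∧ z ∉ A)
  | .ne x y        => ¬ AgreeOn R x y

def regions (M : V → Set α) : Set (Set V) :=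
  Set.range fun t => {v | t ∈ M v}

def ofRegions (R : Set (Set V)) (v : V) : Set (Set V) :=
  {A | A ∈ R ∧ v ∈ A}

lemma BSTLit.sat_iff_holds (M : V → ZFSet) (l : BSTLit V) :
    l.Sat M ↔ l.Holds fun v => (M v : Set ZFSet) := by
  cases l <;> simp [BSTLit.Sat, BSTLit.Holds, ← SetLike.coe_set_eq]

lemma BSTLit.fulfilledBy_iff_holds (F : V → Set (Set V)) (l : BSTLit V) :
    l.FulfilledBy F ↔ l.Holds F := by
  cases l <;> rfl

lemma BSTLit.holds_image_iff {f : α → β} (hf : Function.Injective f) (M : V → Set α)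
    (l : BSTLit V) : (l.Holds fun v => f '' M v) ↔ l.Holds M := by
  cases l <;> simp only [BSTLit.Holds, ← Set.image_union, ← Set.image_sdiff hf,
    hf.image_injective.eq_iff, ne_eq]

lemma BSTLit.holds_iff_holdsOnRegions (M : V → Set α) (l : BSTLit V) :
    l.Holds M ↔ l.HoldsOnRegions (regions M) := by
  cases l <;> simp only [BSTLit.Holds, BSTLit.HoldsOnRegions, AgreeOn, regions,
    Set.forall_mem_range, Set.mem_ofPred_eq, Set.ext_iff, Set.mem_union, Set.mem_sdiff, ne_eq]

lemma BSTLit.holds_ofRegions_iff (R : Set (Set V)) (l : BSTLit V) :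
    l.Holds (ofRegions R) ↔ l.HoldsOnRegions R := by
  cases l <;> simp only [BSTLit.Holds, BSTLit.HoldsOnRegions, AgreeOn, ofRegions, ne_eq,
    Set.ext_iff, Set.mem_ofPred_eq, Set.mem_union, Set.mem_sdiff]
  · exact forall_congr' fun A => by tauto
  · exact forall_congr' fun A => by tauto
  · exact not_congr (forall_congr' fun A => by tauto)

lemma BSTLit.HoldsOnRegions.mono {R S : Set (Set V)} {l : BSTLit V}
    (hl : l.HoldsOnRegions R) (hSR : S ⊆ R) (hsep : ∀ x y, AgreeOn S x y → AgreeOn R x y) :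
    l.HoldsOnRegions S := by
  cases l with
  | eqUnion x y z => exact fun A hA => hl A (hSR hA)
  | eqDiff x y z => exact fun A hA => hl A (hSR hA)
  | ne x y => exact fun hxy => hl (hsep x y hxy)

lemma ncard_iUnion_ofRegions_le (S : Finset (Set V)) :
    (⋃ v, ofRegions (S : Set (Set V)) v).ncard ≤ S.card := by
  rw [← Set.ncard_coe_finset]
  exact Set.ncard_le_ncard (Set.iUnion_subset fun _ _ hA => hA.1) S.finite_toSet

lemma exists_separating_subfamily (R : Set (Set V)) (W : Finset V) :
    ∃ S : Finset (Set V), ↑S ⊆ R ∧ S.card ≤ W.card - 1 ∧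
      ∀ x ∈ W, ∀ y ∈ W, AgreeOn S x y → AgreeOn R x y := by
  classical
  induction W using Finset.strongInduction with
  | H W ih =>
    by_cases hall : ∀ x ∈ W, ∀ y ∈ W, AgreeOn R x y
    · exact ⟨∅, by simp, by simp, fun x hx y hy _ => hall x hx y hy⟩
    obtain ⟨A, hA, a, ha, haA, b, hb, hbA⟩ : ∃ A ∈ R, ∃ a ∈ W, a ∈ A ∧ ∃ b ∈ W, b ∉ A := by
      simp only [AgreeOn, not_forall] at hall
      obtain ⟨x, hx, y, hy, A, hA, hxy⟩ := hall
      by_cases hxA : x ∈ A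
      exacts [⟨A, hA, x, hx, hxA, y, hy, by tauto⟩, ⟨A, hA, y, hy, by tauto, x, hx, hxA⟩]
    obtain ⟨S₁, hS₁R, hS₁card, hS₁⟩ := ih (W.filter (· ∈ A)) (Finset.filter_ssubset.2 ⟨b, hb, hbA⟩)
    obtain ⟨S₂, hS₂R, hS₂card, hS₂⟩ :=
      ih (W.filter (· ∉ A)) (Finset.filter_ssubset.2 ⟨a, ha, not_not.2 haA⟩)
    have hsplit := Finset.card_filter_add_card_filter_not (s := W) (· ∈ A)
    have h₁ : 0 < (W.filter (· ∈ A)).card := Finset.card_pos.2 ⟨a, Finset.mem_filter.2 ⟨ha, haA⟩⟩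
    have h₂ : 0 < (W.filter (· ∉ A)).card := Finset.card_pos.2 ⟨b, Finset.mem_filter.2 ⟨hb, hbA⟩⟩
    refine ⟨insert A (S₁ ∪ S₂), ?_, ?_, fun u hu v hv huv => ?_⟩
    · simp [Set.insert_subset_iff, hA, hS₁R, hS₂R]
    · have := (Finset.card_insert_le A (S₁ ∪ S₂)).trans
        (Nat.succ_le_succ (Finset.card_union_le S₁ S₂))
      omega
    have huvA := huv A (by simp)
    by_cases huA : u ∈ A
    · exact hS₁ u (Finset.mem_filter.2 ⟨hu, huA⟩) v (Finset.mem_filter.2 ⟨hv, huvA.1 huA⟩)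
        fun B hB => huv B (by simp [hB])
    · exact hS₂ u (Finset.mem_filter.2 ⟨hu, huA⟩) v (Finset.mem_filter.2 ⟨hv, mt huvA.2 huA⟩)
        fun B hB => huv B (by simp [hB])

lemma exists_injective_zfset (γ : Type w) [Small.{u} γ] :
    ∃ f : γ → ZFSet.{u}, Function.Injective f :=
  ⟨fun a => (Ordinal.typein WellOrderingRel (equivShrink γ a)).toZFSet,
    Ordinal.toZFSet_injective.comp <|
      (Ordinal.typein_injective WellOrderingRel).comp (equivShrink γ).injective⟩

lemma exists_zfset_model {γ : Type w} [Small.{u} γ] {Φ : List (BSTLit V)} (F : V → Set γ)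
    (hF : ∀ l ∈ Φ, l.Holds F) :
    ∃ M : V → ZFSet.{u}, ∀ l ∈ Φ, l.Holds fun v => (M v : Set ZFSet) := by
  obtain ⟨f, hf⟩ := exists_injective_zfset.{u} γ
  refine ⟨fun v => ZFSet.range fun a : F v => f a, fun l hl => ?_⟩
  simpa only [ZFSet.coe_range, ← Set.image_eq_range, BSTLit.holds_image_iff hf] using hF l hl

end

/-- a BST-conjunction over a finite `V` is satisfiable iff it is fulfilled
by a map `F` using at most `|V| - 1` blocks. -/
theorem stmt7 {V : Type} [Fintype V] (Φ : List (BSTLit V)) :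
    (∃ M : V → ZFSet, ∀ l ∈ Φ, BSTLit.Sat M l) ↔
      ∃ F : V → Set (Set V), (∀ v, ∀ s ∈ F v, s.Nonempty) ∧
        (∀ l ∈ Φ, BSTLit.FulfilledBy F l) ∧ (⋃ v, F v).ncard ≤ Fintype.card V - 1 := by
  simp only [BSTLit.sat_iff_holds, BSTLit.fulfilledBy_iff_holds]
  constructor
  · rintro ⟨M, hM⟩
    obtain ⟨S, hSR, hcard, hsep⟩ :=
      exists_separating_subfamily (regions fun v => (M v : Set ZFSet)) Finset.univ
    refine ⟨ofRegions S, fun v A hA => ⟨v, hA.2⟩, fun l hl => ?_,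
      (ncard_iUnion_ofRegions_le S).trans hcard⟩
    rw [BSTLit.holds_ofRegions_iff]
    exact ((BSTLit.holds_iff_holdsOnRegions _ l).1 (hM l hl)).mono hSR
      fun x y => hsep x (Finset.mem_univ x) y (Finset.mem_univ y)
  · rintro ⟨F, -, hF, -⟩
    exact exists_zfset_model F hF

end BSTO
end

section
/- Let Σ be a partition. For all collections ℬ, ℬ' of nonempty subsets of Σ of cardinality at most 2 (i.e., ℬ, ℬ' ⊆ Pow₁,₂(Σ)), one has ⋃ Pow*₁,₂[ℬ] = ⋃ Pow*₁,₂[ℬ'] if and only if ℬ = ℬ'. -/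
/-!
A member `t` of `Pow*₁,₂ b`, for `b` a set of blocks of a partition `S`, determines `b`:
it is the set of blocks of `S` that meet `t`, because every element of `t` lies in a block of
`b` and distinct blocks are disjoint. Hence the sets `Pow*₁,₂ b` are pairwise disjoint, and
they are nonempty when `b` has at most two blocks (pick one element from each block), so the
family `ℬ` can be read off `⋃ Pow*₁,₂[ℬ]`.
-/

namespace BSTO

section Partition

variable {S : ZFSet}

theorem IsPartition.mem_of_mem_powAst12 (hS : IsPartition S) {b t x u : ZFSet} (hb : b ⊆ S)
    (ht : t ∈ powAst12 b) (hx : x ∈ S) (hut : u ∈ t) (hux : u ∈ x) : x ∈ b := by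
  obtain ⟨y, hyb, huy⟩ := ZFSet.mem_sUnion.1 (ht.1 hut)
  by_contra hxb
  exact hS.2 x hx y (hb hyb) (fun hxy => hxb (hxy ▸ hyb)) u hux huy

theorem IsPartition.eq_of_mem_powAst12 (hS : IsPartition S) {b b' t : ZFSet} (hb : b ⊆ S)
    (hb' : b' ⊆ S) (ht : t ∈ powAst12 b) (ht' : t ∈ powAst12 b') : b = b' := by
  have key : ∀ {c c'}, c ⊆ S → c' ⊆ S → t ∈ powAst12 c → t ∈ powAst12 c' → ∀ x ∈ c, x ∈ c' :=
    fun hc hc' htc htc' x hx =>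
      let ⟨_, hut, hux⟩ := htc.2.1 x hx
      hS.mem_of_mem_powAst12 hc' htc' (hc hx) hut hux
  exact ZFSet.ext fun x => ⟨key hb hb' ht ht' x, key hb' hb ht' ht x⟩

theorem IsPartition.pairwiseDisjoint_powAst12 (hS : IsPartition S) :
    {b : ZFSet | b ⊆ S}.PairwiseDisjoint powAst12 := by
  intro b hb b' hb' hne
  refine Set.disjoint_left.2 fun t ht ht' => hne ?_
  exact hS.eq_of_mem_powAst12 hb hb' ht ht'

theorem powAst12_pair_nonempty {p q : ZFSet} (hp : p.Nonempty) (hq : q.Nonempty) :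
    (powAst12 {p, q}).Nonempty := by
  obtain ⟨u, hu⟩ := hp
  obtain ⟨v, hv⟩ := hq
  refine ⟨{u, v}, fun w hw => ?_, fun s hs => ?_, u, v, rfl⟩
  · rcases ZFSet.mem_pair.1 hw with rfl | rfl
    · exact ZFSet.mem_sUnion.2 ⟨p, ZFSet.mem_pair.2 (Or.inl rfl), hu⟩
    · exact ZFSet.mem_sUnion.2 ⟨q, ZFSet.mem_pair.2 (Or.inr rfl), hv⟩
  · rcases ZFSet.mem_pair.1 hs with rfl | rfl
    · exact ⟨u, ZFSet.mem_pair.2 (Or.inl rfl), hu⟩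
    · exact ⟨v, ZFSet.mem_pair.2 (Or.inr rfl), hv⟩

variable {B : Set ZFSet}

theorem subset_of_forall_eq_pair (hB : ∀ b ∈ B, ∃ p ∈ S, ∃ q ∈ S, b = {p, q}) :
    B ⊆ {b : ZFSet | b ⊆ S} := by
  intro b hb x hx
  obtain ⟨p, hp, q, hq, rfl⟩ := hB b hb
  rcases ZFSet.mem_pair.1 hx with rfl | rfl <;> assumption

theorem IsPartition.powAst12_nonempty_of_forall_eq_pair (hS : IsPartition S)
    (hB : ∀ b ∈ B, ∃ p ∈ S, ∃ q ∈ S, b = {p, q}) : ∀ b ∈ B, (powAst12 b).Nonempty := by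
  intro b hb
  obtain ⟨p, hp, q, hq, rfl⟩ := hB b hb
  exact powAst12_pair_nonempty ((ZFSet.eq_empty_or_nonempty p).resolve_left (hS.1 p hp))
    ((ZFSet.eq_empty_or_nonempty q).resolve_left (hS.1 q hq))

end Partition

/-- injectivity of `Pow*₁,₂` on families of nonempty subsets of a
partition of cardinality at most 2. -/
theorem stmt8 (S : ZFSet) (hS : IsPartition S) (B B' : Set ZFSet)
    (hB : ∀ b ∈ B, ∃ p, p ∈ S ∧ ∃ q, q ∈ S ∧ b = ({p, q} : ZFSet))
    (hB' : ∀ b ∈ B', ∃ p, p ∈ S ∧ ∃ q, q ∈ S ∧ b = ({p, q} : ZFSet)) :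
    (⋃ b ∈ B, powAst12 b) = (⋃ b ∈ B', powAst12 b) ↔ B = B' := by
  have hdisj : (B ∪ B').PairwiseDisjoint powAst12 := hS.pairwiseDisjoint_powAst12.subset
    (Set.union_subset (subset_of_forall_eq_pair hB) (subset_of_forall_eq_pair hB'))
  refine ⟨fun h => subset_antisymm ?_ ?_, fun h => h ▸ rfl⟩
  · exact hdisj.subset_of_biUnion_subset_biUnion
      (hS.powAst12_nonempty_of_forall_eq_pair hB) h.subset
  · exact (Set.union_comm B B' ▸ hdisj).subset_of_biUnion_subset_biUnion
      (hS.powAst12_nonempty_of_forall_eq_pair hB') h.superset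

end BSTO
end

section
/- The ⊗-graph G_Σ induced by any partition Σ of well-founded sets is accessible, i.e., every place of G_Σ is accessible from the source places of G_Σ. -/
namespace BSTO

/-!
A place `q` that is not a source has its block `q•` in `Σ_⊗`, so every `x ∈ q•` lies in
`Pow*₁,₂(B)` for some upblock `B = {p₁•, p₂•} ∈ Π_⊗`, and then `q ∈ 𝒯({p₁, p₂})`. As `x` meets
both `p₁•` and `p₂•`, the places `p₁`, `p₂` own blocks containing members of `x`; hence
`∈`-induction on `x`, i.e. well-foundedness, makes every place accessible.
-/

section InducedGraph

variable {S : ZFSet} {P : Type} (e : P ≃ S.toSet) {Pi : Set ZFSet}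

theorem exists_places_of_mem_sigmaOtimes
    (hPi1 : ∀ b ∈ Pi, ∃ p, p ∈ S ∧ ∃ q, q ∈ S ∧ b = ({p, q} : ZFSet))
    (hPi2 : (⋃ c ∈ sigmaOtimes S, c.toSet) = ⋃ b ∈ Pi, powAst12 b)
    {c x : ZFSet} (hc : c ∈ sigmaOtimes S) (hx : x ∈ c) :
    ∃ p₁ p₂ : P, ({(e p₁ : ZFSet), (e p₂ : ZFSet)} : ZFSet) ∈ Pi ∧
      x ∈ powAst12 ({(e p₁ : ZFSet), (e p₂ : ZFSet)} : ZFSet) := by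
  have hxU : x ∈ ⋃ b ∈ Pi, powAst12 b := hPi2 ▸ Set.mem_biUnion hc hx
  obtain ⟨b, hb, hxb⟩ := Set.mem_iUnion₂.1 hxU
  obtain ⟨a₁, ha₁, a₂, ha₂, rfl⟩ := hPi1 b hb
  refine ⟨e.symm ⟨a₁, ha₁⟩, e.symm ⟨a₂, ha₂⟩, ?_⟩
  simpa only [Equiv.apply_symm_apply] using ⟨hb, hxb⟩

theorem accessible_inducedT_of_mem
    (hPi1 : ∀ b ∈ Pi, ∃ p, p ∈ S ∧ ∃ q, q ∈ S ∧ b = ({p, q} : ZFSet))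
    (hPi2 : (⋃ c ∈ sigmaOtimes S, c.toSet) = ⋃ b ∈ Pi, powAst12 b)
    (x : ZFSet) : ∀ q : P, x ∈ (e q : ZFSet) → Accessible (inducedT S e Pi) q := by
  induction x using ZFSet.inductionOn with
  | h x IH =>
  intro q hxq
  by_cases hsource : ∀ A ∈ NodesOf P, q ∉ inducedT S e Pi A
  · exact .source q hsource
  push Not at hsource
  obtain ⟨-, -, ⟨-, -, -, -, hq, -⟩⟩ := hsource
  obtain ⟨p₁, p₂, hPi, hx⟩ := exists_places_of_mem_sigmaOtimes e hPi1 hPi2 hq hxq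
  have hmeets : ∀ p ∈ ({p₁, p₂} : Set P), ∃ u, u ∈ x ∧ u ∈ (e p : ZFSet) := by
    rintro p (rfl | rfl)
    · exact hx.2.1 _ (ZFSet.mem_pair.2 (.inl rfl))
    · exact hx.2.1 _ (ZFSet.mem_pair.2 (.inr rfl))
  refine .step q {p₁, p₂} ⟨p₁, p₂, rfl⟩ (fun p hp => ?_) ⟨p₁, p₂, rfl, hPi, hq, x, hxq, hx⟩
  obtain ⟨u, hux, hup⟩ := hmeets p hp
  exact IH u hux p hup

end InducedGraph

theorem stmt11_general (S : ZFSet) {P : Type} (e : P ≃ S.toSet)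
    (Pi : Set ZFSet)
    (hPi1 : ∀ b ∈ Pi, ∃ p, p ∈ S ∧ ∃ q, q ∈ S ∧ b = ({p, q} : ZFSet))
    (hPi2 : (⋃ c ∈ sigmaOtimes S, c.toSet) = ⋃ b ∈ Pi, powAst12 b) :
    ∀ p : P, Accessible (inducedT S e Pi) p := by
  intro p
  by_cases hsource : ∀ A ∈ NodesOf P, p ∉ inducedT S e Pi A
  · exact .source p hsource
  push Not at hsource
  obtain ⟨-, -, ⟨-, -, -, -, -, x, hxp, -⟩⟩ := hsource
  exact accessible_inducedT_of_mem e hPi1 hPi2 x p hxp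

/-- the ⊗-graph induced by any partition `S` (via a bijection `e` from
the places onto the blocks, and relative to the set `Pi` of ⊗-upblocks) is accessible. -/
theorem stmt11 (S : ZFSet) (hS : IsPartition S) {P : Type} (e : P ≃ S.toSet)
    (Pi : Set ZFSet)
    (hPi1 : ∀ b ∈ Pi, ∃ p, p ∈ S ∧ ∃ q, q ∈ S ∧ b = ({p, q} : ZFSet))
    (hPi2 : (⋃ c ∈ sigmaOtimes S, c.toSet) = ⋃ b ∈ Pi, powAst12 b) :
    ∀ p : P, Accessible (inducedT S e Pi) p :=
  stmt11_general S e Pi hPi1 hPi2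

end BSTO
end

section
/- Every nonempty well-founded set x (e.g. ZFSet) such that x ⊗ x ⊆ x (i.e., {u,v} ∈ x whenever u ∈ x and v ∈ x) is infinite. Consequently, the BST⊗-formula x ≠ x \ x ∧ x ⊗ x ⊆ x is satisfiable (for instance by interpreting x as the set HF of hereditarily finite sets) but admits no finite model. -/
/-! A finite nonempty set has a member `u` of maximal rank, while `{u} = {u, u}` has larger rank;
so a nonempty set closed under pairs is infinite. Conversely `V_ ω`, the set of hereditarily finite
sets, is closed under pairs because `rank {u, v} = max (rank u) (rank v) + 1`. -/

namespace ZFSet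

open Order

theorem sdiff_self (x : ZFSet) : x \ x = ∅ := by
  ext
  simp

theorem toSet_infinite_of_singleton_mem {x : ZFSet} (hx : x.Nonempty)
    (hcl : ∀ u ∈ x, ({u} : ZFSet) ∈ x) : x.toSet.Infinite := by
  intro hfin
  obtain ⟨u, hu, hmax⟩ := hfin.exists_maximalFor rank x.toSet hx
  have hlt : rank u < rank {u} := rank_lt_of_mem (mem_singleton.2 rfl)
  exact hlt.not_ge (hmax (hcl u hu) hlt.le)

theorem toSet_infinite_of_pair_mem {x : ZFSet} (hx : x ≠ ∅)
    (hcl : ∀ u ∈ x, ∀ v ∈ x, ({u, v} : ZFSet) ∈ x) : x.toSet.Infinite :=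
  toSet_infinite_of_singleton_mem (x.eq_empty_or_nonempty.resolve_left hx) fun u hu => by
    simpa using hcl u hu u hu

theorem pair_mem_vonNeumann {o : Ordinal} (ho : IsSuccPrelimit o) {u v : ZFSet}
    (hu : u ∈ V_ o) (hv : v ∈ V_ o) : ({u, v} : ZFSet) ∈ V_ o := by
  rw [mem_vonNeumann] at hu hv ⊢
  rw [rank_pair]
  exact max_lt (ho.succ_lt hu) (ho.succ_lt hv)

theorem empty_mem_vonNeumann {o : Ordinal} (ho : o ≠ 0) : ∅ ∈ V_ o := by
  rw [mem_vonNeumann, rank_empty]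
  exact pos_iff_ne_zero.2 ho

end ZFSet

namespace BSTO

open Ordinal

/-- every nonempty set closed under unordered pairs of its elements is
infinite; consequently `x ≠ x \ x ∧ x ⊗ x ⊆ x` is satisfiable but has no finite model. -/
theorem stmt16 :
    (∀ x : ZFSet, x ≠ (∅ : ZFSet) → (∀ u ∈ x, ∀ v ∈ x, ({u, v} : ZFSet) ∈ x) →
      x.toSet.Infinite) ∧
    (∃ x : ZFSet, x ≠ x \ x ∧ uprod x x ⊆ x.toSet) ∧
    (∀ x : ZFSet, x ≠ x \ x → uprod x x ⊆ x.toSet → x.toSet.Infinite) := by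
  refine ⟨fun x => ZFSet.toSet_infinite_of_pair_mem, ⟨ZFSet.vonNeumann ω, ?_, ?_⟩, ?_⟩
  · rw [ZFSet.sdiff_self]
    exact fun h => ZFSet.notMem_empty _ (h ▸ ZFSet.empty_mem_vonNeumann omega0_ne_zero)
  · rintro _ ⟨u, hu, v, hv, rfl⟩
    exact ZFSet.pair_mem_vonNeumann isSuccLimit_omega0.isSuccPrelimit hu hv
  · intro x hx hsub
    rw [ZFSet.sdiff_self] at hx
    exact ZFSet.toSet_infinite_of_pair_mem hx fun u hu v hv => hsub ⟨u, hu, v, hv, rfl⟩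

end BSTO
end

section
/- Every finitely satisfiable BST⊗-conjunction is fulfilled by an accessible ⊗-graph that admits a topological ⊗-order (i.e., by an accessible ordered ⊗-graph). -/
/-!
Take a finite model `M` and let the elements of its domain be the places; a node `{p, q}`
targets the place `{p, q}` when that pair belongs to the domain. Then `M y ⊗ M z` is literally
the set of targets of the nodes in `F y ⊗ F z`, which gives (c1)–(c3), and the Boolean literals
transfer along the injection of places into sets. A target contains the places of its node as
elements, so ordering places by rank (ties broken by any well-order) is a topological ⊗-order;
being well-founded, it also makes every place accessible.
-/

namespace BSTO

section TopologicalOrder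

variable {P : Type} {T : Set P → Set P} {r : P → P → Prop}

theorem exists_isMaxIn [Finite P] [IsStrictTotalOrder P r] {s : Set P} (hs : s.Nonempty) :
    ∃ m, IsMaxIn r s m := by
  obtain ⟨m, hm, hmax⟩ := (Finite.wellFounded_of_trans_of_irrefl (Function.swap r)).has_min s hs
  refine ⟨m, hm, fun p hp => ?_⟩
  rcases trichotomous_of r p m with h | h | h
  exacts [Or.inr h, Or.inl h, (hmax p hp h).elim]

theorem isTopOOrder_of_lt_targets [Finite P] [IsStrictTotalOrder P r]
    (h : ∀ A ∈ NodesOf P, ∀ p ∈ A, ∀ w ∈ T A, r p w) : IsTopOOrder T r := by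
  refine ⟨irrefl_of r, fun _ _ _ => trans_of r, fun a b hab => ?_, fun A hA hT => ?_⟩
  · rcases trichotomous_of r a b with h | h | h
    exacts [Or.inl h, (hab h).elim, Or.inr h]
  · obtain ⟨p, q, rfl⟩ := hA
    obtain ⟨m, hm⟩ := exists_isMaxIn (r := r) (Set.insert_nonempty p {q})
    obtain ⟨m', hm'⟩ := exists_isMaxIn (r := r) hT
    exact ⟨m, m', hm, hm', h _ ⟨p, q, rfl⟩ m hm.1 m' hm'.1⟩

theorem accessible_of_lt_targets (hwf : WellFounded r)
    (h : ∀ A ∈ NodesOf P, ∀ p ∈ A, ∀ w ∈ T A, r p w) (p : P) : Accessible T p := by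
  induction p using hwf.induction with
  | _ p ih =>
    by_cases hsrc : ∃ A ∈ NodesOf P, p ∈ T A
    · obtain ⟨A, hA, hpA⟩ := hsrc
      exact .step p A hA (fun q hq => ih q (h A hA q hq p hpA)) hpA
    · push Not at hsrc
      exact .source p hsrc

end TopologicalOrder

def rankLex : ZFSet → ZFSet → Prop :=
  Function.onFun (Prod.Lex (· < ·) WellOrderingRel) fun x => (x.rank, x)

instance : IsStrictTotalOrder ZFSet rankLex :=
  Function.Injective.isStrictTotalOrder_onFun (Prod.Lex (· < ·) WellOrderingRel)
    fun _ _ h => congrArg Prod.snd h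

theorem rankLex_wellFounded : WellFounded rankLex :=
  InvImage.wf _ IsWellFounded.wf

theorem rankLex_of_mem {x y : ZFSet} (h : x ∈ y) : rankLex x y :=
  Prod.Lex.left _ _ (ZFSet.rank_lt_of_mem h)

section PairGraph

variable {P : Type} {g : P → ZFSet}

def pairTargets (g : P → ZFSet) (A : Set P) : Set P :=
  {w | A ∈ NodesOf P ∧ (g w).toSet = g '' A}

theorem pairTargets_eq_empty {A : Set P} (hA : A ∉ NodesOf P) : pairTargets g A = ∅ :=
  Set.eq_empty_of_forall_notMem fun _ hw => hA hw.1

theorem mem_of_mem_pairTargets {A : Set P} {p w : P} (hp : p ∈ A)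
    (hw : w ∈ pairTargets g A) : g p ∈ g w :=
  show g p ∈ (g w).toSet from hw.2 ▸ Set.mem_image_of_mem g hp

theorem eq_of_mem_pairTargets (hg : g.Injective) {A B : Set P} {w : P}
    (hA : w ∈ pairTargets g A) (hB : w ∈ pairTargets g B) : A = B :=
  hg.image_injective (hA.2.symm.trans hB.2)

theorem mem_pairTargets_pair {p q w : P} : w ∈ pairTargets g {p, q} ↔ g w = {g p, g q} := by
  rw [← SetLike.coe_set_eq, ZFSet.coe_insert, ZFSet.coe_singleton, ← Set.image_pair]
  exact and_iff_right ⟨p, q, rfl⟩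

theorem rankLex_lt_pairTargets :
    ∀ A ∈ NodesOf P, ∀ p ∈ A, ∀ w ∈ pairTargets g A, Function.onFun rankLex g p w :=
  fun _ _ _ hp _ hw => rankLex_of_mem (mem_of_mem_pairTargets hp hw)

theorem mem_uprod_iff_mem_biUnion_pairTargets {s t : ZFSet} (hs : s.toSet ⊆ Set.range g)
    (ht : t.toSet ⊆ Set.range g) (w : P) :
    g w ∈ uprod s t ↔ w ∈ ⋃ A ∈ setUprod (g ⁻¹' s.toSet) (g ⁻¹' t.toSet), pairTargets g A := by
  constructor
  · rintro ⟨u, hu, v, hv, hw⟩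
    obtain ⟨p, rfl⟩ := hs hu
    obtain ⟨q, rfl⟩ := ht hv
    exact Set.mem_biUnion ⟨p, hu, q, hv, rfl⟩ (mem_pairTargets_pair.2 hw)
  · intro hw
    obtain ⟨A, ⟨p, hp, q, hq, rfl⟩, hwA⟩ := Set.mem_iUnion₂.1 hw
    exact ⟨g p, hp, g q, hq, mem_pairTargets_pair.1 hwA⟩

variable {V : Type} {M : V → ZFSet}

theorem graphFulfilled_eqUprod (hg : g.Injective) (hM : ∀ v, (M v).toSet ⊆ Set.range g)
    {x y z : V} (h : (M x).toSet = uprod (M y) (M z)) :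
    Lit.GraphFulfilled (pairTargets g) (fun v => g ⁻¹' (M v).toSet) (.eqUprod x y z) := by
  have hx (w : P) : w ∈ g ⁻¹' (M x).toSet ↔
      w ∈ ⋃ A ∈ setUprod (g ⁻¹' (M y).toSet) (g ⁻¹' (M z).toSet), pairTargets g A := by
    rw [Set.mem_preimage, h]
    exact mem_uprod_iff_mem_biUnion_pairTargets (hM y) (hM z) w
  refine ⟨fun υ hυ ζ hζ => ?_, fun w hw => (hx w).1 hw, ?_⟩
  · have hpair : ({g υ, g ζ} : ZFSet) ∈ (M x).toSet := h ▸ ⟨_, hυ, _, hζ, rfl⟩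
    obtain ⟨w, hw⟩ := hM x hpair
    refine ⟨⟨w, mem_pairTargets_pair.2 hw⟩, fun w' hw' => ?_⟩
    rw [Set.mem_preimage, mem_pairTargets_pair.1 hw']
    exact hpair
  · refine Set.eq_empty_of_forall_notMem fun w ⟨hw, hwx⟩ => ?_
    obtain ⟨A, ⟨-, hA⟩, hwA⟩ := Set.mem_iUnion₂.1 hw
    obtain ⟨B, hB, hwB⟩ := Set.mem_iUnion₂.1 ((hx w).1 hwx)
    exact hA (eq_of_mem_pairTargets hg hwA hwB ▸ hB)

theorem Lit.graphFulfilled_of_sat (hg : g.Injective) (hM : ∀ v, (M v).toSet ⊆ Set.range g)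
    {l : Lit V} (hl : l.Sat M) :
    l.GraphFulfilled (pairTargets g) (fun v => g ⁻¹' (M v).toSet) := by
  cases l with
  | eqUnion x y z =>
    show g ⁻¹' (M x).toSet = g ⁻¹' (M y).toSet ∪ g ⁻¹' (M z).toSet
    rw [show M x = M y ∪ M z from hl, ← Set.preimage_union]
    exact congrArg _ (ZFSet.coe_union _ _)
  | eqDiff x y z =>
    show g ⁻¹' (M x).toSet = g ⁻¹' (M y).toSet \ g ⁻¹' (M z).toSet
    rw [show M x = M y \ M z from hl, ← Set.preimage_sdiff]
    exact congrArg _ (ZFSet.coe_sdiff _ _)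
  | ne x y =>
    exact fun h => hl (SetLike.coe_injective ((Set.preimage_eq_preimage' (hM x) (hM y)).1 h))
  | eqUprod x y z => exact graphFulfilled_eqUprod hg hM hl

end PairGraph

-- `↥D` lives in `Type (u + 1)`, so the places must be a copy of `D` in `Type`.
theorem exists_injective_range_eq_of_finite {D : Set ZFSet} (hD : D.Finite) :
    ∃ (P : Type) (g : P → ZFSet), Finite P ∧ g.Injective ∧ Set.range g = D := by
  have := hD.to_subtype
  obtain ⟨n, ⟨e⟩⟩ := Finite.exists_equiv_fin D
  refine ⟨Fin n, fun i => e.symm i, inferInstance, ?_, ?_⟩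
  · exact Subtype.val_injective.comp e.symm.injective
  · change Set.range (Subtype.val ∘ e.symm) = D
    rw [Set.range_comp Subtype.val, e.symm.range_eq_univ, Set.image_univ, Subtype.range_coe]

theorem stmt17_general {V : Type} (Φ : List (Lit V))
    (h : ∃ M : V → ZFSet, (∀ l ∈ Φ, Lit.Sat M l) ∧ (⋃ v : V, (M v).toSet).Finite) :
    ∃ (P : Type) (T : Set P → Set P) (r : P → P → Prop),
      Finite P ∧ (∀ A, A ∉ NodesOf P → T A = ∅) ∧ (∀ p : P, Accessible T p) ∧
      IsTopOOrder T r ∧ ∃ F : V → Set P, Fulfills T F Φ := by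
  obtain ⟨M, hsat, hfin⟩ := h
  obtain ⟨P, g, hP, hg, hrange⟩ := exists_injective_range_eq_of_finite hfin
  have hM : ∀ v, (M v).toSet ⊆ Set.range g := hrange ▸ Set.subset_iUnion (fun v => (M v).toSet)
  have := hg.isStrictTotalOrder_onFun rankLex
  exact ⟨P, pairTargets g, Function.onFun rankLex g, hP, fun _ => pairTargets_eq_empty,
    accessible_of_lt_targets (InvImage.wf g rankLex_wellFounded) rankLex_lt_pairTargets,
    isTopOOrder_of_lt_targets rankLex_lt_pairTargets, _,
    fun l hl => Lit.graphFulfilled_of_sat hg hM (hsat l hl)⟩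

/-- every finitely satisfiable BST⊗-conjunction is fulfilled by an
accessible ⊗-graph admitting a topological ⊗-order. -/
theorem stmt17 {V : Type} [Finite V] (Φ : List (Lit V))
    (h : ∃ M : V → ZFSet, (∀ l ∈ Φ, Lit.Sat M l) ∧ (⋃ v : V, (M v).toSet).Finite) :
    ∃ (P : Type) (T : Set P → Set P) (r : P → P → Prop),
      Finite P ∧ (∀ A, A ∉ NodesOf P → T A = ∅) ∧ (∀ p : P, Accessible T p) ∧
      IsTopOOrder T r ∧ ∃ F : V → Set P, Fulfills T F Φ :=
  stmt17_general Φ h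

end BSTO
end
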